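/- For positive semidefinite matrices A and B with generalized geometric mean M(A,B) := √A·√(√(A⁺)·B·√(A⁺))·√A, one has supp(A) ∩ supp(B) ⊆ supp(M(A,B)) ⊆ supp(A). -/

import Mathlib

open scoped ComplexOrder

open Classical in
/-- The unique positive semidefinite square root of a positive semidefinite matrix
(junk value 0 otherwise). -/
noncomputable def psqrt {n : Type*} [Fintype n] [DecidableEq n] (X : Matrix n n ℂ) :
    Matrix n n ℂ :=
  if h : X.PosSemidef then (h.isHermitian.eigenvectorUnitary : Matrix n n ℂ) *
    Matrix.diagonal ((↑) ∘ Real.sqrt ∘ h.isHermitian.eigenvalues) *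
    (star h.isHermitian.eigenvectorUnitary : Matrix n n ℂ) else 0

/-- The range (support) of a matrix, i.e. the orthogonal complement of its kernel. -/
noncomputable def msupp {n : Type*} [Fintype n] [DecidableEq n] (X : Matrix n n ℂ) :
    Submodule ℂ (EuclideanSpace ℂ n) :=
  (LinearMap.ker (Matrix.toEuclideanLin X))ᗮ

/-- The kernel of a matrix, as a subspace of Euclidean space. -/
noncomputable def mker {n : Type*} [Fintype n] [DecidableEq n] (X : Matrix n n ℂ) :
    Submodule ℂ (EuclideanSpace ℂ n) :=
  LinearMap.ker (Matrix.toEuclideanLin X)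

/-- The generalized geometric mean M(A,B) = √A · √(√(A⁺) B √(A⁺)) · √A, where Ap
stands for the Moore–Penrose pseudoinverse A⁺ of A. -/
noncomputable def geoMean {n : Type*} [Fintype n] [DecidableEq n]
    (A Ap B : Matrix n n ℂ) : Matrix n n ℂ :=
  psqrt A * psqrt (psqrt Ap * B * psqrt Ap) * psqrt A

open Matrix in
/-- `Ap` is the Moore–Penrose pseudoinverse of `A` (the four Penrose conditions). -/
def IsMPInv {n : Type*} [Fintype n] [DecidableEq n] (A Ap : Matrix n n ℂ) : Prop :=
  A * Ap * A = A ∧ Ap * A * Ap = Ap ∧ (A * Ap)ᴴ = A * Ap ∧ (Ap * A)ᴴ = Ap * A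

/-!
Since `supp X = (ker X)ᗮ`, the claim amounts to `ker A ⊆ ker M ⊆ ker A + ker B`. For a PSD `Y`,
`Xᴴ Y X v = 0 ↔ Y (X v) = 0`; peeling the factors of `M = S √(Q B Q) S` (`S = √A`, `Q = √A⁺`)
this way gives `M v = 0 ↔ B (Q S v) = 0`. Both inclusions follow, the second from the splitting
`v = (v - Q S v) + Q S v` and `A Q S = A`: by uniqueness of the Moore–Penrose inverse,
`A⁺ = cfc (·⁻¹) A`, so `A Q S` is `x ↦ x · √x⁻¹ · √x = x` applied to `A`.
-/

open Matrix

section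

variable {𝕜 : Type*} [RCLike 𝕜] {m n : Type*} [Fintype m] [Fintype n]

theorem Matrix.PosSemidef.conjTranspose_mul_mul_mulVec_eq_zero_iff {Y : Matrix m m 𝕜}
    (hY : Y.PosSemidef) (X : Matrix m n 𝕜) (v : n → 𝕜) :
    (Xᴴ * Y * X) *ᵥ v = 0 ↔ Y *ᵥ (X *ᵥ v) = 0 := by
  rw [← (hY.conjTranspose_mul_mul_same X).dotProduct_mulVec_zero_iff,
    ← hY.dotProduct_mulVec_zero_iff, ← mulVec_mulVec, ← mulVec_mulVec, dotProduct_mulVec,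
    vecMul_conjTranspose, star_star]

variable [DecidableEq n]

theorem Matrix.cfc_mul_cfc (A : Matrix n n 𝕜) (f g : ℝ → ℝ) :
    cfc f A * cfc g A = cfc (fun x => f x * g x) A :=
  (cfc_mul f g A (A.finite_real_spectrum.continuousOn f)
    (A.finite_real_spectrum.continuousOn g)).symm

end

section

variable {n : Type*} [Fintype n] [DecidableEq n]

theorem IsMPInv.unique {A B C : Matrix n n ℂ} (hB : IsMPInv A B) (hC : IsMPInv A C) :
    B = C := by
  obtain ⟨hB1, hB2, hB3, hB4⟩ := hB
  obtain ⟨hC1, hC2, hC3, hC4⟩ := hC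
  have hAB : A * B = A * C :=
    calc A * B = (A * B)ᴴ := hB3.symm
    _ = Bᴴ * (A * C * A)ᴴ := by rw [conjTranspose_mul, hC1]
    _ = (A * B)ᴴ * (A * C)ᴴ := by simp only [conjTranspose_mul, mul_assoc]
    _ = A * B * A * C := by rw [hB3, hC3, mul_assoc (A * B)]
    _ = A * C := by rw [hB1]
  have hBA : B * A = C * A :=
    calc B * A = (B * A)ᴴ := hB4.symm
    _ = (A * C * A)ᴴ * Bᴴ := by rw [conjTranspose_mul, hC1]
    _ = (C * A)ᴴ * (B * A)ᴴ := by simp only [conjTranspose_mul, mul_assoc]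
    _ = C * (A * B * A) := by rw [hC4, hB4]; simp only [mul_assoc]
    _ = C * A := by rw [hB1]
  calc B = B * A * B := hB2.symm
  _ = C * A * C := by rw [hBA, mul_assoc, hAB, ← mul_assoc]
  _ = C := hC2

theorem isMPInv_cfc_inv {A : Matrix n n ℂ} (hA : A.IsHermitian) :
    IsMPInv A (cfc (·⁻¹ : ℝ → ℝ) A) := by
  have hA : IsSelfAdjoint A := hA
  have hAAp : A * cfc (·⁻¹ : ℝ → ℝ) A = cfc (fun x : ℝ => x * x⁻¹) A := by
    rw [← cfc_mul_cfc A, cfc_id' ℝ A]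
  have hApA : cfc (·⁻¹ : ℝ → ℝ) A * A = cfc (fun x : ℝ => x⁻¹ * x) A := by
    rw [← cfc_mul_cfc A, cfc_id' ℝ A]
  refine ⟨?_, ?_, ?_, ?_⟩
  · conv_lhs => rw [hAAp]; arg 2; rw [← cfc_id' ℝ A]
    simpa only [cfc_mul_cfc A, mul_inv_mul_cancel] using cfc_id' ℝ A
  · rw [hApA, cfc_mul_cfc A]
    congr 1 with x
    simpa using mul_inv_mul_cancel x⁻¹
  · rw [hAAp]; exact IsSelfAdjoint.cfc.star_eq
  · rw [hApA]; exact IsSelfAdjoint.cfc.star_eq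

theorem psqrt_eq_cfc {X : Matrix n n ℂ} (hX : X.PosSemidef) : psqrt X = cfc Real.sqrt X := by
  rw [psqrt, dif_pos hX, hX.isHermitian.cfc_eq, IsHermitian.cfc, Unitary.conjStarAlgAut_apply]
  rfl

open scoped MatrixOrder in
theorem posSemidef_psqrt (X : Matrix n n ℂ) : (psqrt X).PosSemidef := by
  by_cases hX : X.PosSemidef
  · rw [psqrt_eq_cfc hX, ← nonneg_iff_posSemidef]
    exact cfc_nonneg fun x _ => Real.sqrt_nonneg x
  · rw [psqrt, dif_neg hX]
    exact .zero

open scoped MatrixOrder in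
theorem psqrt_mul_self {X : Matrix n n ℂ} (hX : X.PosSemidef) : psqrt X * psqrt X = X := by
  rw [psqrt_eq_cfc hX, cfc_mul_cfc X]
  conv_rhs => rw [← cfc_id' ℝ X]
  exact cfc_congr fun x hx => Real.mul_self_sqrt (spectrum_nonneg_of_nonneg hX.nonneg hx)

theorem psqrt_mulVec_eq_zero_iff {X : Matrix n n ℂ} (hX : X.PosSemidef) (v : n → ℂ) :
    psqrt X *ᵥ v = 0 ↔ X *ᵥ v = 0 := by
  have h := PosSemidef.one.conjTranspose_mul_mul_mulVec_eq_zero_iff (psqrt X) v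
  rwa [mul_one, (posSemidef_psqrt X).isHermitian.eq, psqrt_mul_self hX, one_mulVec,
    iff_comm] at h

open scoped MatrixOrder in
theorem mul_psqrt_mul_psqrt_of_isMPInv {A Ap : Matrix n n ℂ} (hA : A.PosSemidef)
    (hAp : IsMPInv A Ap) : A * psqrt Ap * psqrt A = A := by
  have hspec : ∀ x ∈ spectrum ℝ A, 0 ≤ x := fun x hx => spectrum_nonneg_of_nonneg hA.nonneg hx
  obtain rfl : Ap = cfc (·⁻¹ : ℝ → ℝ) A := hAp.unique (isMPInv_cfc_inv hA.isHermitian)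
  have hAp : (cfc (·⁻¹ : ℝ → ℝ) A).PosSemidef :=
    nonneg_iff_posSemidef.mp (cfc_nonneg fun x hx => inv_nonneg.mpr (hspec x hx))
  rw [psqrt_eq_cfc hA, psqrt_eq_cfc hAp, ← cfc_comp' Real.sqrt (·⁻¹) A
    ((A.finite_real_spectrum.image _).continuousOn _) (A.finite_real_spectrum.continuousOn _)]
  conv_lhs => arg 1; arg 1; rw [← cfc_id' ℝ A]
  rw [cfc_mul_cfc A, cfc_mul_cfc A]
  conv_rhs => rw [← cfc_id' ℝ A]
  refine cfc_congr fun x hx => ?_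
  rcases (hspec x hx).eq_or_lt with h | h
  · simp [← h]
  · rw [Real.sqrt_inv, mul_assoc, inv_mul_cancel₀ (Real.sqrt_pos.mpr h).ne', mul_one]

theorem geoMean_mulVec_eq_zero_iff (A Ap : Matrix n n ℂ) {B : Matrix n n ℂ}
    (hB : B.PosSemidef) (v : n → ℂ) :
    geoMean A Ap B *ᵥ v = 0 ↔ B *ᵥ (psqrt Ap *ᵥ (psqrt A *ᵥ v)) = 0 := by
  have hS := (posSemidef_psqrt A).isHermitian.eq
  have hQ := (posSemidef_psqrt Ap).isHermitian.eq
  have hC₀ : (psqrt Ap * B * psqrt Ap).PosSemidef := by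
    simpa only [hQ] using hB.conjTranspose_mul_mul_same (psqrt Ap)
  calc geoMean A Ap B *ᵥ v = 0
      ↔ psqrt (psqrt Ap * B * psqrt Ap) *ᵥ (psqrt A *ᵥ v) = 0 := by
        rw [← (posSemidef_psqrt _).conjTranspose_mul_mul_mulVec_eq_zero_iff, hS, geoMean]
    _ ↔ (psqrt Ap * B * psqrt Ap) *ᵥ (psqrt A *ᵥ v) = 0 := psqrt_mulVec_eq_zero_iff hC₀ _
    _ ↔ B *ᵥ (psqrt Ap *ᵥ (psqrt A *ᵥ v)) = 0 := by
        rw [← hB.conjTranspose_mul_mul_mulVec_eq_zero_iff, hQ]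

theorem mem_mker {X : Matrix n n ℂ} {x : EuclideanSpace ℂ n} :
    x ∈ mker X ↔ X *ᵥ x.ofLp = 0 := by
  rw [mker, LinearMap.mem_ker, toLpLin_apply, WithLp.toLp_eq_zero]

theorem mker_le_mker_geoMean {A : Matrix n n ℂ} (hA : A.PosSemidef) (Ap : Matrix n n ℂ)
    {B : Matrix n n ℂ} (hB : B.PosSemidef) : mker A ≤ mker (geoMean A Ap B) := by
  intro x hx
  rw [mem_mker] at hx ⊢
  rw [geoMean_mulVec_eq_zero_iff A Ap hB, (psqrt_mulVec_eq_zero_iff hA _).mpr hx, mulVec_zero,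
    mulVec_zero]

theorem mker_geoMean_le_sup {A Ap B : Matrix n n ℂ} (hA : A.PosSemidef) (hB : B.PosSemidef)
    (hAp : IsMPInv A Ap) : mker (geoMean A Ap B) ≤ mker A ⊔ mker B := by
  intro x hx
  rw [mem_mker, geoMean_mulVec_eq_zero_iff A Ap hB, mulVec_mulVec _ (psqrt Ap)] at hx
  set P := psqrt Ap * psqrt A
  refine Submodule.mem_sup.mpr
    ⟨x - WithLp.toLp 2 (P *ᵥ x.ofLp), ?_, WithLp.toLp 2 (P *ᵥ x.ofLp), ?_, sub_add_cancel _ _⟩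
  · rw [mem_mker, WithLp.ofLp_sub, WithLp.ofLp_toLp, mulVec_sub, mulVec_mulVec, ← mul_assoc,
      mul_psqrt_mul_psqrt_of_isMPInv hA hAp, sub_self]
  · rwa [mem_mker, WithLp.ofLp_toLp]

end

/-- supp(A) ∩ supp(B) ⊆ supp(M(A,B)) ⊆ supp(A) for the generalized geometric mean. -/
theorem supp_geoMean_between
    {n : Type*} [Fintype n] [DecidableEq n]
    (A B Ap : Matrix n n ℂ) (hA : A.PosSemidef) (hB : B.PosSemidef)
    (hAp : IsMPInv A Ap) :
    msupp A ⊓ msupp B ≤ msupp (geoMean A Ap B) ∧ msupp (geoMean A Ap B) ≤ msupp A :=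
  ⟨(Submodule.inf_orthogonal (mker A) (mker B)).trans_le
      (Submodule.orthogonal_le (mker_geoMean_le_sup hA hB hAp)),
    Submodule.orthogonal_le (mker_le_mker_geoMean hA Ap hB)⟩
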